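/- (Retraction Lemma) Let G be a group and let 0 → M →^{ι} N →^{π} P → 0 be a short exact sequence of ℤ[G]-modules such that: (1) M is finitely generated and equipped with a filling norm ‖·‖_M; (2) N is a free ℤ[G]-module with a fixed (possibly infinite) ℤ[G]-basis, equipped with the induced ℓ1-norm ‖·‖₁; (3) P is a projective ℤ[G]-module. Then there exist a ℤ[G]-module homomorphism ρ : N → M with ρ ∘ ι = id_M and a constant C > 0 such that ‖ρ(x)‖_M ≤ C·‖x‖₁ for all x ∈ N. -/

import Mathlib

/-! Projectivity of `P` splits the sequence, giving a retraction `ρ₀ : N → M`. Since `M` is finitely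
generated, `ι M` lies in the span of finitely many basis vectors `e_s`, `s ∈ T`, so precomposing
`ρ₀` with the coordinate projection onto `T` gives a retraction that kills every `e_s` with `s ∉ T`.
Such a map is bounded: the filling norm is subadditive and `‖c • m‖ ≤ ‖c‖₁ ‖m‖`, so
`‖ρ x‖ ≤ (max_{s ∈ T} ‖ρ e_s‖) · ‖x‖₁`. -/

/-- The ℓ1-norm on the free `ℤ[G]`-module `S →₀ ℤ[G]` with basis indexed by `S`,
induced by the free `ℤ`-basis `{g • e_s}`: `‖x‖₁ = ∑_{s,g} |x_{s,g}|`. -/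
noncomputable def l1Free {G : Type*} [Group G] {S : Type*}
    (x : S →₀ MonoidAlgebra ℤ G) : ℕ :=
  x.sum fun _ a => Finsupp.sum a.coeff fun _ z => z.natAbs

/-- The filling norm on `M` induced by a surjection `η` from a based finitely
generated free `ℤ[G]`-module: `‖m‖_η = min { ‖x‖₁ : η x = m }`. -/
noncomputable def fillNorm {G : Type*} [Group G] {r : ℕ}
    {M : Type*} [AddCommGroup M] [Module (MonoidAlgebra ℤ G) M]
    (η : (Fin r →₀ MonoidAlgebra ℤ G) →ₗ[MonoidAlgebra ℤ G] M) (m : M) : ℕ :=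
  sInf {n : ℕ | ∃ x, η x = m ∧ l1Free x = n}

noncomputable def l1Int {α : Type*} (a : α →₀ ℤ) : ℕ :=
  a.sum fun _ z => z.natAbs

section L1Int

variable {α : Type*}

lemma l1Int_eq_sum_of_support_subset (a : α →₀ ℤ) {s : Finset α} (h : a.support ⊆ s) :
    l1Int a = ∑ i ∈ s, (a i).natAbs :=
  Finsupp.sum_of_support_subset a h _ fun _ _ => rfl

@[simp]
lemma l1Int_zero : l1Int (0 : α →₀ ℤ) = 0 := by
  simp [l1Int]

@[simp]
lemma l1Int_single (i : α) (z : ℤ) : l1Int (Finsupp.single i z) = z.natAbs := by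
  simp [l1Int, Finsupp.sum_single_index]

lemma l1Int_add_le (a b : α →₀ ℤ) : l1Int (a + b) ≤ l1Int a + l1Int b := by
  classical
  rw [l1Int_eq_sum_of_support_subset (a + b) Finsupp.support_add,
    l1Int_eq_sum_of_support_subset a Finset.subset_union_left,
    l1Int_eq_sum_of_support_subset b Finset.subset_union_right, ← Finset.sum_add_distrib]
  exact Finset.sum_le_sum fun i _ => Int.natAbs_add_le (a i) (b i)

lemma l1Int_sum_le {β : Type*} (s : Finset β) (f : β → α →₀ ℤ) :
    l1Int (∑ i ∈ s, f i) ≤ ∑ i ∈ s, l1Int (f i) :=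
  Finset.le_sum_of_subadditive l1Int l1Int_zero.le l1Int_add_le s f

lemma l1Int_coeff_mul_le {G : Type*} [Mul G] (a b : MonoidAlgebra ℤ G) :
    l1Int (a * b).coeff ≤ l1Int a.coeff * l1Int b.coeff := by
  rw [MonoidAlgebra.mul_def]
  unfold Finsupp.sum
  simp only [MonoidAlgebra.coeff_sum, MonoidAlgebra.coeff_single]
  calc _ ≤ ∑ g ∈ a.coeff.support, ∑ h ∈ b.coeff.support,
          l1Int (Finsupp.single (g * h) (a.coeff g * b.coeff h)) :=
        (l1Int_sum_le _ _).trans (Finset.sum_le_sum fun g _ => l1Int_sum_le _ _)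
    _ = l1Int a.coeff * l1Int b.coeff := by
        simp only [l1Int_single, Int.natAbs_mul]
        rw [l1Int_eq_sum_of_support_subset a.coeff le_rfl,
          l1Int_eq_sum_of_support_subset b.coeff le_rfl, Finset.sum_mul_sum]

end L1Int

section L1Free

variable {G : Type*} [Group G] {S : Type*}

lemma l1Free_eq_sum_of_support_subset (x : S →₀ MonoidAlgebra ℤ G) {s : Finset S}
    (h : x.support ⊆ s) : l1Free x = ∑ i ∈ s, l1Int (x i).coeff :=
  Finsupp.sum_of_support_subset x h _ fun _ _ => by simp

lemma l1Free_add_le (x y : S →₀ MonoidAlgebra ℤ G) : l1Free (x + y) ≤ l1Free x + l1Free y := by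
  classical
  rw [l1Free_eq_sum_of_support_subset (x + y) Finsupp.support_add,
    l1Free_eq_sum_of_support_subset x Finset.subset_union_left,
    l1Free_eq_sum_of_support_subset y Finset.subset_union_right, ← Finset.sum_add_distrib]
  exact Finset.sum_le_sum fun i _ => l1Int_add_le (x i).coeff (y i).coeff

lemma l1Free_smul_le (c : MonoidAlgebra ℤ G) (x : S →₀ MonoidAlgebra ℤ G) :
    l1Free (c • x) ≤ l1Int c.coeff * l1Free x := by
  rw [l1Free_eq_sum_of_support_subset (c • x) Finsupp.support_smul,
    l1Free_eq_sum_of_support_subset x le_rfl, Finset.mul_sum]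
  exact Finset.sum_le_sum fun i _ => l1Int_coeff_mul_le c (x i)

end L1Free

section FillNorm

variable {G : Type*} [Group G] {r : ℕ} {M : Type*} [AddCommGroup M]
  [Module (MonoidAlgebra ℤ G) M] {η : (Fin r →₀ MonoidAlgebra ℤ G) →ₗ[MonoidAlgebra ℤ G] M}

lemma fillNorm_le_l1Free {x : Fin r →₀ MonoidAlgebra ℤ G} {m : M} (h : η x = m) :
    fillNorm η m ≤ l1Free x :=
  Nat.sInf_le ⟨x, h, rfl⟩

lemma exists_l1Free_eq_fillNorm (hη : Function.Surjective η) (m : M) :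
    ∃ x, η x = m ∧ l1Free x = fillNorm η m := by
  obtain ⟨x, hx⟩ := hη m
  exact Nat.sInf_mem (s := {n | ∃ x, η x = m ∧ l1Free x = n}) ⟨l1Free x, x, hx, rfl⟩

@[simp]
lemma fillNorm_zero : fillNorm η (0 : M) = 0 :=
  Nat.eq_zero_of_le_zero <| (fillNorm_le_l1Free (map_zero η)).trans_eq (by simp [l1Free])

lemma fillNorm_add_le (hη : Function.Surjective η) (m m' : M) :
    fillNorm η (m + m') ≤ fillNorm η m + fillNorm η m' := by
  obtain ⟨x, rfl, hx⟩ := exists_l1Free_eq_fillNorm hη m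
  obtain ⟨y, rfl, hy⟩ := exists_l1Free_eq_fillNorm hη m'
  rw [← hx, ← hy]
  exact (fillNorm_le_l1Free (map_add η x y)).trans (l1Free_add_le x y)

lemma fillNorm_sum_le (hη : Function.Surjective η) {β : Type*} (s : Finset β) (f : β → M) :
    fillNorm η (∑ i ∈ s, f i) ≤ ∑ i ∈ s, fillNorm η (f i) :=
  Finset.le_sum_of_subadditive (fillNorm η) fillNorm_zero.le (fillNorm_add_le hη) s f

lemma fillNorm_smul_le (hη : Function.Surjective η) (c : MonoidAlgebra ℤ G) (m : M) :
    fillNorm η (c • m) ≤ l1Int c.coeff * fillNorm η m := by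
  obtain ⟨x, rfl, hx⟩ := exists_l1Free_eq_fillNorm hη m
  rw [← hx]
  exact (fillNorm_le_l1Free (map_smul η c x)).trans (l1Free_smul_le c x)

lemma fillNorm_map_le_mul_l1Free (hη : Function.Surjective η) {S : Type*}
    (f : (S →₀ MonoidAlgebra ℤ G) →ₗ[MonoidAlgebra ℤ G] M) {C : ℕ}
    (hC : ∀ s, fillNorm η (f (Finsupp.single s 1)) ≤ C) (x : S →₀ MonoidAlgebra ℤ G) :
    fillNorm η (f x) ≤ C * l1Free x := by
  have hx : f x = ∑ s ∈ x.support, x s • f (Finsupp.single s 1) := by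
    conv_lhs => rw [← Finsupp.sum_single x]
    simp only [Finsupp.sum, map_sum, ← map_smul, Finsupp.smul_single_one]
  calc fillNorm η (f x)
        ≤ ∑ s ∈ x.support, l1Int (x s).coeff * fillNorm η (f (Finsupp.single s 1)) := hx ▸
          (fillNorm_sum_le hη _ _).trans (Finset.sum_le_sum fun s _ => fillNorm_smul_le hη _ _)
    _ ≤ ∑ s ∈ x.support, l1Int (x s).coeff * C := by gcongr with s; exact hC s
    _ = C * l1Free x := by
        rw [l1Free_eq_sum_of_support_subset x le_rfl, Finset.mul_sum]
        simp only [mul_comm]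

end FillNorm

section Retraction

variable {R : Type*} [Ring R] {M N P : Type*} [AddCommGroup M] [Module R M]
  [AddCommGroup N] [Module R N] [AddCommGroup P] [Module R P]

lemma exists_retraction_of_projective [Module.Projective R P] {ι : M →ₗ[R] N} {π : N →ₗ[R] P}
    (hι : Function.Injective ι) (hexact : Function.Exact ι π) (hπ : Function.Surjective π) :
    ∃ ρ : N →ₗ[R] M, ρ ∘ₗ ι = LinearMap.id := by
  obtain ⟨σ, hσ⟩ := Module.projective_lifting_property π LinearMap.id hπ
  have split := hexact.split_tfae'.out 0 1
  exact (split.mp ⟨hι, σ, hσ⟩).2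

lemma exists_finset_range_le_supported [Module.Finite R M] {S : Type*}
    (ι : M →ₗ[R] S →₀ N) : ∃ T : Finset S, LinearMap.range ι ≤ Finsupp.supported N R ↑T := by
  classical
  obtain ⟨F, hF⟩ := Module.Finite.fg_top (R := R) (M := M)
  refine ⟨F.biUnion fun m => (ι m).support, ?_⟩
  rw [LinearMap.range_eq_map, ← hF, Submodule.map_span]
  refine (Finsupp.span_le_supported_biUnion_support _ _).trans (Finsupp.supported_mono ?_)
  simp

lemma exists_retraction_vanishing_off_finset [Module.Finite R M] {S : Type*}
    {ι : M →ₗ[R] S →₀ N} {ρ₀ : (S →₀ N) →ₗ[R] M} (hρ₀ : ρ₀ ∘ₗ ι = LinearMap.id) :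
    ∃ ρ : (S →₀ N) →ₗ[R] M, ρ ∘ₗ ι = LinearMap.id ∧
      ∃ T : Finset S, ∀ s ∉ T, ∀ n, ρ (Finsupp.single s n) = 0 := by
  classical
  obtain ⟨T, hT⟩ := exists_finset_range_le_supported ι
  refine ⟨ρ₀ ∘ₗ (Finsupp.supported N R (T : Set S)).subtype ∘ₗ
    Finsupp.restrictDom N R (T : Set S), ?_, T, ?_⟩
  · ext m
    have hm : ∀ s ∉ (T : Set S), ι m s = 0 := (Finsupp.mem_supported' R _).mp (hT ⟨m, rfl⟩)
    simp only [LinearMap.comp_apply, Submodule.subtype_apply, Finsupp.restrictDom_apply]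
    rw [(Finsupp.filter_eq_self_iff _ _).mpr fun s hs => by_contra fun h => hs (hm s h)]
    exact LinearMap.congr_fun hρ₀ m
  · intro s hs n
    simp [Finsupp.filter_single_of_neg (b := n) _ hs]

end Retraction

/-- The Retraction Lemma: given a short exact sequence `0 → M → N → P → 0` of
`ℤ[G]`-modules with `M` finitely generated carrying a filling norm, `N` free and
based carrying the induced ℓ1-norm, and `P` projective, there is a bounded
retraction `ρ : N → M`. -/
theorem retraction_lemma
    (G : Type*) [Group G] (S : Type*)
    (M P : Type*) [AddCommGroup M] [Module (MonoidAlgebra ℤ G) M]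
    [AddCommGroup P] [Module (MonoidAlgebra ℤ G) P]
    [Module.Finite (MonoidAlgebra ℤ G) M]
    [Module.Projective (MonoidAlgebra ℤ G) P]
    (r : ℕ)
    (ηM : (Fin r →₀ MonoidAlgebra ℤ G) →ₗ[MonoidAlgebra ℤ G] M)
    (hηM : Function.Surjective ηM)
    (ι : M →ₗ[MonoidAlgebra ℤ G] (S →₀ MonoidAlgebra ℤ G))
    (π : (S →₀ MonoidAlgebra ℤ G) →ₗ[MonoidAlgebra ℤ G] P)
    (hι : Function.Injective ι)
    (hexact : LinearMap.range ι = LinearMap.ker π)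
    (hπ : Function.Surjective π) :
    ∃ ρ : (S →₀ MonoidAlgebra ℤ G) →ₗ[MonoidAlgebra ℤ G] M,
      (∀ m : M, ρ (ι m) = m) ∧
      ∃ C : ℕ, 0 < C ∧ ∀ x : S →₀ MonoidAlgebra ℤ G,
        fillNorm ηM (ρ x) ≤ C * l1Free x := by
  obtain ⟨ρ₀, hρ₀⟩ := exists_retraction_of_projective hι (LinearMap.exact_iff.mpr hexact.symm) hπ
  obtain ⟨ρ, hρ, T, hT⟩ := exists_retraction_vanishing_off_finset hρ₀
  set basisNorm := fun s => fillNorm ηM (ρ (Finsupp.single s 1))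
  have hC : ∀ s, basisNorm s ≤ T.sup basisNorm + 1 := by
    intro s
    by_cases hs : s ∈ T
    · exact Nat.le_succ_of_le (Finset.le_sup hs)
    · simp [basisNorm, hT s hs]
  exact ⟨ρ, LinearMap.congr_fun hρ, _, Nat.succ_pos _, fillNorm_map_le_mul_l1Free hηM ρ hC⟩
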